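/- arXiv:1612.09541 — 2 statements merged into one kernel-verified Lean document; each statement's English description precedes it below -/
import Mathlib

section
/- Let 0 < α < 1, m > 0, R > 0, and set ᾱ = 1 - α. Then there exists c > 0 such that for all ξ with |ξ| ≥ 2R and all t ≥ 0, e^{-t·|ξ|^{2α}/(1+m|ξ|²)} ≤ e^{-c |ξ|^{-2ᾱ} t}. Moreover, for any β > 0 there exists C > 0 such that sup_{|ξ| ≥ 2R} |ξ|^{-β} e^{-c |ξ|^{-2ᾱ} t} ≤ C (1+t)^{-β/(2ᾱ)} for all t ≥ 0. -/
open MeasureTheory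

lemma aux_rpow_le_factorial_mul_exp {γ : ℝ} (hγ : 0 ≤ γ) {x : ℝ} (hx : 0 ≤ x) :
    x ^ γ ≤ (Nat.factorial (Nat.ceil γ)) * Real.exp x := by
  have hM : (1:ℝ) ≤ (Nat.factorial (Nat.ceil γ)) := by
    exact_mod_cast Nat.one_le_iff_ne_zero.2 (Nat.factorial_ne_zero _)
  rcases le_total x 1 with h1 | h1
  · calc x ^ γ ≤ 1 ^ γ := Real.rpow_le_rpow hx h1 hγ
      _ = 1 := Real.one_rpow _
      _ ≤ (Nat.factorial (Nat.ceil γ)) * Real.exp x := by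
          nlinarith [Real.one_le_exp hx, Real.exp_pos x]
  · set N := Nat.ceil γ with hN
    have h2 : x ^ γ ≤ x ^ (N:ℝ) := Real.rpow_le_rpow_of_exponent_le h1 (Nat.le_ceil γ)
    have h3 : x ^ (N:ℝ) = x ^ N := Real.rpow_natCast x N
    have h4 : x ^ N / (Nat.factorial N) ≤ Real.exp x := by
      calc x ^ N / (Nat.factorial N) ≤ ∑ i ∈ Finset.range (N+1), x ^ i / (Nat.factorial i) := by
            refine Finset.single_le_sum (f := fun i => x ^ i / (Nat.factorial i)) (fun i _ => ?_)
              (Finset.self_mem_range_succ N)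
            positivity
        _ ≤ Real.exp x := Real.sum_le_exp_of_nonneg hx _
    have hfac : (0:ℝ) < (Nat.factorial N) := by positivity
    have : x ^ N ≤ (Nat.factorial N) * Real.exp x := by
      rw [div_le_iff₀ hfac] at h4; linarith [h4]
    calc x ^ γ ≤ x ^ (N:ℝ) := h2
      _ = x ^ N := h3
      _ ≤ (Nat.factorial N) * Real.exp x := this

/-- High-frequency symbol estimate with regularity loss for `0 < α < 1`:
decay in time comes with negative powers of `|ξ|`. -/
theorem high_frequency_symbol_bound_loss (n : ℕ) (α m R : ℝ)
    (hα0 : 0 < α) (hα1 : α < 1) (hm : 0 < m) (hR : 0 < R) :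
    ∃ c > 0,
      (∀ ξ : EuclideanSpace ℝ (Fin n), 2 * R ≤ ‖ξ‖ → ∀ t : ℝ, 0 ≤ t →
        Real.exp (-(t * (‖ξ‖ ^ (2 * α) / (1 + m * ‖ξ‖ ^ 2))))
          ≤ Real.exp (-(c * ‖ξ‖ ^ (-(2 * (1 - α))) * t))) ∧
      (∀ β : ℝ, 0 < β → ∃ C > 0, ∀ t : ℝ, 0 ≤ t →
        ∀ ξ : EuclideanSpace ℝ (Fin n), 2 * R ≤ ‖ξ‖ →
          ‖ξ‖ ^ (-β) * Real.exp (-(c * ‖ξ‖ ^ (-(2 * (1 - α))) * t))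
            ≤ C * (1 + t) ^ (-(β / (2 * (1 - α))))) := by
  have hᾱ : 0 < 2 * (1 - α) := by linarith
  set c : ℝ := 1 / (1 / (4 * R ^ 2) + m) with hc_def
  have hK : 0 < 1 / (4 * R ^ 2) + m := by positivity
  have hc : 0 < c := by positivity
  -- key pointwise inequality on the symbol
  have key : ∀ ξ : EuclideanSpace ℝ (Fin n), 2 * R ≤ ‖ξ‖ →
      c * ‖ξ‖ ^ (-(2 * (1 - α))) ≤ ‖ξ‖ ^ (2 * α) / (1 + m * ‖ξ‖ ^ 2) := by
    intro ξ hξ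
    set s := ‖ξ‖ with hs
    have hs0 : 0 < s := lt_of_lt_of_le (by positivity) hξ
    have hden : 0 < 1 + m * s ^ 2 := by positivity
    have h1 : 1 + m * s ^ 2 ≤ (1 / (4 * R ^ 2) + m) * s ^ 2 := by
      have hsq : (2 * R) ^ 2 ≤ s ^ 2 := pow_le_pow_left₀ (by positivity) hξ 2
      have h2R : (0:ℝ) < 4 * R ^ 2 := by positivity
      have hA : 1 ≤ 1 / (4 * R ^ 2) * s ^ 2 := by
        rw [div_mul_eq_mul_div, one_mul, le_div_iff₀ h2R]; nlinarith
      nlinarith [hA]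
    -- rewrite rpow products
    have hprod : s ^ (2 * α) * s ^ (2 * (1 - α)) = s ^ 2 := by
      have he : (2 * α + 2 * (1 - α)) = ((2:ℕ):ℝ) := by push_cast; ring
      rw [← Real.rpow_add hs0, he, Real.rpow_natCast]
    rw [le_div_iff₀ hden]
    have hneg : s ^ (-(2 * (1 - α))) = (s ^ (2 * (1 - α)))⁻¹ := by
      rw [Real.rpow_neg hs0.le]
    have hp2 : 0 < s ^ (2 * (1 - α)) := Real.rpow_pos_of_pos hs0 _
    rw [hneg]
    rw [mul_comm c _, mul_assoc, inv_mul_le_iff₀ hp2]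
    calc c * (1 + m * s ^ 2) ≤ c * ((1 / (4 * R ^ 2) + m) * s ^ 2) := by
          apply mul_le_mul_of_nonneg_left h1 hc.le
      _ = s ^ 2 := by rw [hc_def]; field_simp
      _ = s ^ (2 * α) * s ^ (2 * (1 - α)) := hprod.symm
      _ = s ^ (2 * (1 - α)) * s ^ (2 * α) := mul_comm _ _
  refine ⟨c, hc, ?_, ?_⟩
  · intro ξ hξ t ht
    have := key ξ hξ
    apply Real.exp_le_exp.2
    rw [neg_le_neg_iff]
    calc c * ‖ξ‖ ^ (-(2 * (1 - α))) * t ≤ (‖ξ‖ ^ (2 * α) / (1 + m * ‖ξ‖ ^ 2)) * t :=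
          mul_le_mul_of_nonneg_right this ht
      _ = t * (‖ξ‖ ^ (2 * α) / (1 + m * ‖ξ‖ ^ 2)) := mul_comm _ _
  · intro β hβ
    set γ : ℝ := β / (2 * (1 - α)) with hγ_def
    have hγ : 0 < γ := by positivity
    set M : ℝ := ((Nat.factorial (Nat.ceil γ) : ℕ) : ℝ) with hM_def
    have hM1 : (1:ℝ) ≤ M := by
      rw [hM_def]; exact_mod_cast Nat.one_le_iff_ne_zero.2 (Nat.factorial_ne_zero _)
    refine ⟨(2 * R) ^ (-β) * 2 ^ γ + M * c ^ (-γ) * 2 ^ γ, by positivity, ?_⟩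
    intro t ht ξ hξ
    set s := ‖ξ‖ with hs
    have hs0 : 0 < s := lt_of_lt_of_le (by positivity) hξ
    have h2R : (0:ℝ) < 2 * R := by positivity
    have hC1 : (0:ℝ) ≤ (2 * R) ^ (-β) * 2 ^ γ := by positivity
    have hC2 : (0:ℝ) ≤ M * c ^ (-γ) * 2 ^ γ := by positivity
    have h1t : (0:ℝ) < 1 + t := by linarith
    rcases le_total t 1 with htt | htt
    · -- small time: bound exp by 1, s^{-β} ≤ (2R)^{-β}
      have hexp : Real.exp (-(c * s ^ (-(2 * (1 - α))) * t)) ≤ 1 := by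
        apply Real.exp_le_one_iff.2
        have : 0 ≤ c * s ^ (-(2 * (1 - α))) * t := by positivity
        linarith
      have hsβ : s ^ (-β) ≤ (2 * R) ^ (-β) :=
        Real.rpow_le_rpow_of_nonpos h2R hξ (by linarith)
      have h2γ : (2:ℝ) ^ (-γ) ≤ (1 + t) ^ (-γ) :=
        Real.rpow_le_rpow_of_nonpos h1t (by linarith) (by linarith)
      calc s ^ (-β) * Real.exp (-(c * s ^ (-(2 * (1 - α))) * t))
          ≤ (2 * R) ^ (-β) * 1 := by
            apply mul_le_mul hsβ hexp (Real.exp_pos _).le (by positivity)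
        _ = (2 * R) ^ (-β) * 2 ^ γ * 2 ^ (-γ) := by
            rw [mul_assoc, ← Real.rpow_add (by norm_num)]
            norm_num
        _ ≤ (2 * R) ^ (-β) * 2 ^ γ * (1 + t) ^ (-γ) := by
            apply mul_le_mul_of_nonneg_left h2γ (by positivity)
        _ ≤ ((2 * R) ^ (-β) * 2 ^ γ + M * c ^ (-γ) * 2 ^ γ) * (1 + t) ^ (-γ) := by
            apply mul_le_mul_of_nonneg_right _ (by positivity)
            linarith
        _ = ((2 * R) ^ (-β) * 2 ^ γ + M * c ^ (-γ) * 2 ^ γ) * (1 + t) ^ (-(β / (2 * (1 - α)))) := rfl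
    · -- large time
      have ht0 : (0:ℝ) < t := by linarith
      set x : ℝ := c * s ^ (-(2 * (1 - α))) * t with hx_def
      have hsp : (0:ℝ) < s ^ (-(2 * (1 - α))) := Real.rpow_pos_of_pos hs0 _
      have hx0 : 0 < x := by positivity
      -- s^{-β} = x^γ * (c*t)^{-γ}
      have hsb : s ^ (-β) = x ^ γ * (c * t) ^ (-γ) := by
        have h1 : s ^ (-β) = (s ^ (-(2 * (1 - α)))) ^ γ := by
          rw [← Real.rpow_mul hs0.le]
          congr 1
          rw [hγ_def]
          have h1α : (1 - α) ≠ 0 := ne_of_gt (by linarith)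
          field_simp
        have h2 : (s ^ (-(2 * (1 - α)))) ^ γ = (x / (c * t)) ^ γ := by
          congr 1
          rw [hx_def]
          field_simp
        rw [h1, h2, Real.div_rpow hx0.le (by positivity : (0:ℝ) ≤ c * t),
          Real.rpow_neg (by positivity : (0:ℝ) ≤ c * t), div_eq_mul_inv]
      have hbound : x ^ γ * Real.exp (-x) ≤ M :=
        calc x ^ γ * Real.exp (-x) ≤ (M * Real.exp x) * Real.exp (-x) := by
              apply mul_le_mul_of_nonneg_right
                (aux_rpow_le_factorial_mul_exp hγ.le hx0.le) (Real.exp_pos _).le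
          _ = M := by rw [mul_assoc, ← Real.exp_add]; simp
      have hct : (c * t) ^ (-γ) = c ^ (-γ) * t ^ (-γ) :=
        Real.mul_rpow hc.le ht0.le ▸ by
          rw [Real.mul_rpow hc.le ht0.le]
      have htγ : t ^ (-γ) ≤ 2 ^ γ * (1 + t) ^ (-γ) := by
        have h12 : (1 + t) / 2 ≤ t := by linarith
        have h12' : (0:ℝ) < (1 + t) / 2 := by linarith
        have := Real.rpow_le_rpow_of_nonpos h12' h12 (neg_nonpos.2 hγ.le)
        calc t ^ (-γ) ≤ ((1 + t) / 2) ^ (-γ) := this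
          _ = 2 ^ γ * (1 + t) ^ (-γ) := by
            rw [Real.div_rpow h1t.le (by norm_num),
              Real.rpow_neg (by norm_num : (0:ℝ) ≤ 2)]
            field_simp
      calc s ^ (-β) * Real.exp (-(c * s ^ (-(2 * (1 - α))) * t))
          = (x ^ γ * Real.exp (-x)) * (c ^ (-γ) * t ^ (-γ)) := by
            rw [hsb, hct, hx_def]; ring
        _ ≤ M * (c ^ (-γ) * t ^ (-γ)) := by
            apply mul_le_mul_of_nonneg_right hbound (by positivity)
        _ ≤ M * (c ^ (-γ) * (2 ^ γ * (1 + t) ^ (-γ))) := by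
            apply mul_le_mul_of_nonneg_left _ (by positivity)
            exact mul_le_mul_of_nonneg_left htγ (by positivity)
        _ = M * c ^ (-γ) * 2 ^ γ * (1 + t) ^ (-γ) := by ring
        _ ≤ ((2 * R) ^ (-β) * 2 ^ γ + M * c ^ (-γ) * 2 ^ γ) * (1 + t) ^ (-γ) := by
            apply mul_le_mul_of_nonneg_right _ (by positivity)
            linarith
        _ = ((2 * R) ^ (-β) * 2 ^ γ + M * c ^ (-γ) * 2 ^ γ) * (1 + t) ^ (-(β / (2 * (1 - α)))) := rfl
end

section
/- Let α > 0, l ≥ 0, n ≥ 1, and let G_L be the low-frequency part of the Green function as above. Then there exists C > 0 such that for all φ ∈ L¹(ℝⁿ) and t ≥ 0, ‖Λ^l (G_L(·,t) * φ)‖_{L²} ≤ C (1+t)^{-n/(4α) - l/(2α)} ‖φ‖_{L¹}. -/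
open MeasureTheory Metric Set
open scoped ENNReal NNReal

lemma aux_exp_poly_bound (b p q : ℝ) (hb : 0 < b) (hp : 0 < p) (hq : 0 ≤ q) :
    ∃ C > 0, ∀ s : ℝ, 0 ≤ s → (1 + s) ^ q * Real.exp (-(b * s ^ p)) ≤ C := by
  set k : ℕ := ⌈q / p⌉₊ with hk
  have hqpk : q ≤ p * k := by
    have := Nat.le_ceil (q / p)
    rw [div_le_iff₀ hp] at this
    linarith [this]
  refine ⟨2 ^ q * max 1 (k.factorial / b ^ k), by positivity, fun s hs => ?_⟩
  rcases le_or_gt s 1 with h1 | h1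
  · have h2 : (1 + s) ^ q ≤ 2 ^ q :=
      Real.rpow_le_rpow (by linarith) (by linarith) hq
    have h3 : Real.exp (-(b * s ^ p)) ≤ 1 := by
      rw [Real.exp_le_one_iff]
      have : 0 ≤ s ^ p := Real.rpow_nonneg hs p
      nlinarith
    calc (1 + s) ^ q * Real.exp (-(b * s ^ p)) ≤ 2 ^ q * 1 :=
          mul_le_mul h2 h3 (Real.exp_pos _).le (by positivity)
      _ ≤ 2 ^ q * max 1 (k.factorial / b ^ k) :=
          mul_le_mul_of_nonneg_left (le_max_left _ _) (by positivity)
  · have hs0 : 0 < s := by linarith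
    have hsp : 0 < s ^ p := Real.rpow_pos_of_pos hs0 p
    have hx : 0 < b * s ^ p := by positivity
    have hpf := Real.pow_div_factorial_le_exp (b * s ^ p) hx.le k
    have hexp : Real.exp (-(b * s ^ p)) ≤ k.factorial / (b * s ^ p) ^ k := by
      rw [Real.exp_neg, inv_eq_one_div, div_le_div_iff₀ (Real.exp_pos _) (pow_pos hx k)]
      have hfac : (0:ℝ) < k.factorial := by positivity
      rw [div_le_iff₀ hfac] at hpf
      nlinarith [hpf]
    have h2 : (1 + s) ^ q ≤ (2 * s) ^ q :=
      Real.rpow_le_rpow (by linarith) (by linarith) hq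
    calc (1 + s) ^ q * Real.exp (-(b * s ^ p))
        ≤ (2 * s) ^ q * (k.factorial / (b * s ^ p) ^ k) :=
          mul_le_mul h2 hexp (Real.exp_pos _).le (Real.rpow_nonneg (by positivity) q)
      _ = 2 ^ q * (k.factorial / b ^ k) * (s ^ q / s ^ (p * k)) := by
          rw [Real.mul_rpow (by norm_num) hs0.le, mul_pow,
            ← Real.rpow_natCast (s ^ p) k, ← Real.rpow_mul hs]
          have hbk : (b:ℝ) ^ k ≠ 0 := by positivity
          have hspk : s ^ (p * (k:ℝ)) ≠ 0 := by positivity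
          field_simp
      _ ≤ 2 ^ q * (k.factorial / b ^ k) * 1 := by
          apply mul_le_mul_of_nonneg_left _ (by positivity)
          rw [← Real.rpow_sub hs0]
          exact Real.rpow_le_one_of_one_le_of_nonpos h1.le (by linarith)
      _ ≤ 2 ^ q * max 1 (k.factorial / b ^ k) := by
          rw [mul_one]
          exact mul_le_mul_of_nonneg_left (le_max_right _ _) (by positivity)

lemma aux_integrable (n : ℕ) (b p l2 : ℝ) (hb : 0 < b) (hp : 0 < p) (hl2 : 0 ≤ l2) :
    Integrable (fun η : EuclideanSpace ℝ (Fin n) =>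
      ‖η‖ ^ l2 * Real.exp (-(b * ‖η‖ ^ p))) := by
  obtain ⟨C, hC, hCb⟩ := aux_exp_poly_bound b p (l2 + (n + 1)) hb hp (by positivity)
  have hcont : Continuous (fun η : EuclideanSpace ℝ (Fin n) =>
      ‖η‖ ^ l2 * Real.exp (-(b * ‖η‖ ^ p))) := by
    apply Continuous.mul
    · exact continuous_norm.rpow_const fun _ => Or.inr hl2
    · exact Real.continuous_exp.comp
        ((continuous_const.mul (continuous_norm.rpow_const fun _ => Or.inr hp.le)).neg)
  have hr : ((Module.finrank ℝ (EuclideanSpace ℝ (Fin n))) : ℝ) < ((n : ℝ) + 1) := by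
    rw [finrank_euclideanSpace_fin]; linarith
  refine ((integrable_one_add_norm (E := EuclideanSpace ℝ (Fin n)) hr).const_mul
    C).mono' hcont.aestronglyMeasurable ?_
  filter_upwards with η
  have h0 : (0:ℝ) ≤ 1 + ‖η‖ := by positivity
  have h1 : ‖η‖ ^ l2 ≤ (1 + ‖η‖) ^ l2 :=
    Real.rpow_le_rpow (norm_nonneg _) (by linarith) hl2
  have hsplit : (1 + ‖η‖) ^ l2 = (1 + ‖η‖) ^ (l2 + ((n:ℝ) + 1)) * (1 + ‖η‖) ^ (-((n:ℝ) + 1)) := by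
    rw [← Real.rpow_add (by positivity)]
    ring_nf
  have key : ‖η‖ ^ l2 * Real.exp (-(b * ‖η‖ ^ p)) ≤ C * (1 + ‖η‖) ^ (-((n:ℝ) + 1)) := by
    calc ‖η‖ ^ l2 * Real.exp (-(b * ‖η‖ ^ p))
        ≤ (1 + ‖η‖) ^ l2 * Real.exp (-(b * ‖η‖ ^ p)) :=
          mul_le_mul_of_nonneg_right h1 (Real.exp_pos _).le
      _ = ((1 + ‖η‖) ^ (l2 + ((n:ℝ) + 1)) * Real.exp (-(b * ‖η‖ ^ p))) *
            (1 + ‖η‖) ^ (-((n:ℝ) + 1)) := by rw [hsplit]; ring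
      _ ≤ C * (1 + ‖η‖) ^ (-((n:ℝ) + 1)) := by
          apply mul_le_mul_of_nonneg_right (hCb _ (norm_nonneg _))
          positivity
  rw [Real.norm_eq_abs, abs_of_nonneg (by positivity)]
  exact key

set_option maxHeartbeats 1000000 in
lemma aux_core (n : ℕ) (α l m R : ℝ) (hα : 0 < α) (hl : 0 ≤ l) (hm : 0 < m)
    (hR : 0 < R) (hR1 : R < 1) (χ : EuclideanSpace ℝ (Fin n) → ℝ) (hχc : Continuous χ)
    (hχ0 : ∀ ξ, 2 * R ≤ ‖ξ‖ → χ ξ = 0) :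
    ∃ K > 0, ∀ t : ℝ, 0 ≤ t →
      (∫ ξ : EuclideanSpace ℝ (Fin n),
        (‖ξ‖ ^ l * χ ξ * Real.exp (-(t * (‖ξ‖ ^ (2*α) / (1 + m * ‖ξ‖ ^ 2))))) ^ 2)
      ≤ K * (1 + t) ^ (-(((n:ℝ) + 2*l) / (2*α))) := by
  classical
  set A : ℝ := 1 + m * (2*R)^2 with hAdef
  have hA : 0 < A := by positivity
  set b : ℝ := 2 / A with hbdef
  have hb : 0 < b := by positivity
  set β : ℝ := ((n:ℝ) + 2*l) / (2*α) with hβdef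
  have hβ : 0 ≤ β := by positivity
  -- bound on χ
  obtain ⟨M, hM⟩ := (isCompact_closedBall (0:EuclideanSpace ℝ (Fin n)) (2*R)).exists_bound_of_continuousOn
    hχc.continuousOn
  set M' : ℝ := max M 1 with hM'def
  have hM'pos : 0 < M' := lt_of_lt_of_le one_pos (le_max_right _ _)
  have hMχ : ∀ ξ ∈ closedBall (0:EuclideanSpace ℝ (Fin n)) (2*R), |χ ξ| ≤ M' := fun ξ hξ =>
    le_trans (by simpa [Real.norm_eq_abs] using hM ξ hξ) (le_max_left _ _)
  -- dominating function
  set D : ℝ → EuclideanSpace ℝ (Fin n) → ℝ := fun t => indicator (closedBall (0:EuclideanSpace ℝ (Fin n)) (2*R))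
    (fun ξ => M'^2 * (‖ξ‖ ^ (2*l) * Real.exp (-(b * t * ‖ξ‖ ^ (2*α))))) with hDdef
  have hcontD : ∀ t : ℝ, Continuous (fun ξ : EuclideanSpace ℝ (Fin n) =>
      M'^2 * (‖ξ‖ ^ (2*l) * Real.exp (-(b * t * ‖ξ‖ ^ (2*α))))) := by
    intro t
    exact continuous_const.mul
      ((continuous_norm.rpow_const fun _ => Or.inr (by linarith)).mul
        (Real.continuous_exp.comp
          ((continuous_const.mul (continuous_norm.rpow_const fun _ => Or.inr (by linarith))).neg)))
  have hDint : ∀ t : ℝ, Integrable (D t) := by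
    intro t
    simp only [hDdef]
    exact (((hcontD t).continuousOn).integrableOn_compact
      (isCompact_closedBall _ _)).integrable_indicator measurableSet_closedBall
  -- pointwise bound
  have hg2D : ∀ t : ℝ, 0 ≤ t → ∀ ξ : EuclideanSpace ℝ (Fin n),
      (‖ξ‖ ^ l * χ ξ * Real.exp (-(t * (‖ξ‖ ^ (2*α) / (1 + m * ‖ξ‖ ^ 2))))) ^ 2 ≤ D t ξ := by
    intro t ht ξ
    by_cases hξ : ξ ∈ closedBall (0:EuclideanSpace ℝ (Fin n)) (2*R)
    · simp only [hDdef]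
      rw [indicator_of_mem hξ]
      have hξn : ‖ξ‖ ≤ 2*R := by simpa [mem_closedBall, dist_zero_right] using hξ
      have hden : (0:ℝ) < 1 + m * ‖ξ‖ ^ 2 := by positivity
      have hsq : ‖ξ‖^2 ≤ (2*R)^2 := pow_le_pow_left₀ (norm_nonneg _) hξn 2
      have hdenA : 1 + m * ‖ξ‖ ^ 2 ≤ A := by
        rw [hAdef]
        nlinarith [hsq]
      have hx2 : (‖ξ‖ ^ l) ^ 2 = ‖ξ‖ ^ (2*l) := by
        rw [← Real.rpow_natCast (‖ξ‖ ^ l) 2, ← Real.rpow_mul (norm_nonneg _)]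
        norm_num
        ring_nf
      have hy2 : (χ ξ) ^ 2 ≤ M'^2 := by
        rw [← sq_abs]
        exact pow_le_pow_left₀ (abs_nonneg _) (hMχ ξ hξ) 2
      have hz2 : (Real.exp (-(t * (‖ξ‖ ^ (2*α) / (1 + m * ‖ξ‖ ^ 2))))) ^ 2
          ≤ Real.exp (-(b * t * ‖ξ‖ ^ (2*α))) := by
        rw [sq, ← Real.exp_add]
        apply Real.exp_le_exp.mpr
        have hX : (0:ℝ) ≤ ‖ξ‖ ^ (2*α) := Real.rpow_nonneg (norm_nonneg _) _
        have hratio : ‖ξ‖ ^ (2*α) / A ≤ ‖ξ‖ ^ (2*α) / (1 + m * ‖ξ‖ ^ 2) := by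
          gcongr
        have h2t : (0:ℝ) ≤ 2 * t := by linarith
        have := mul_le_mul_of_nonneg_left hratio h2t
        have hrw : b * t * ‖ξ‖ ^ (2*α) = 2 * t * (‖ξ‖ ^ (2*α) / A) := by
          rw [hbdef]; ring
        nlinarith [this]
      calc (‖ξ‖ ^ l * χ ξ * Real.exp (-(t * (‖ξ‖ ^ (2*α) / (1 + m * ‖ξ‖ ^ 2))))) ^ 2
          = ‖ξ‖ ^ (2*l) * ((χ ξ)^2 *
              (Real.exp (-(t * (‖ξ‖ ^ (2*α) / (1 + m * ‖ξ‖ ^ 2)))))^2) := by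
            rw [mul_pow, mul_pow, hx2]; ring
        _ ≤ ‖ξ‖ ^ (2*l) * (M'^2 * Real.exp (-(b * t * ‖ξ‖ ^ (2*α)))) := by
            apply mul_le_mul_of_nonneg_left _ (Real.rpow_nonneg (norm_nonneg _) _)
            exact mul_le_mul hy2 hz2 (by positivity) (by positivity)
        _ = M'^2 * (‖ξ‖ ^ (2*l) * Real.exp (-(b * t * ‖ξ‖ ^ (2*α)))) := by ring
    · have hχξ : χ ξ = 0 := by
        apply hχ0
        have : 2*R < ‖ξ‖ := by
          by_contra h
          exact hξ (by simpa [mem_closedBall, dist_zero_right] using not_lt.mp h)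
        linarith
      simp only [hDdef]; rw [indicator_of_notMem hξ]
      simp [hχξ]
  -- integral of D bound
  set V : ℝ := (volume (closedBall (0:EuclideanSpace ℝ (Fin n)) (2*R))).toReal with hVdef
  have hV : 0 ≤ V := ENNReal.toReal_nonneg
  set J : ℝ := ∫ η : EuclideanSpace ℝ (Fin n), ‖η‖ ^ (2*l) * Real.exp (-(b * ‖η‖ ^ (2*α)))
    with hJdef
  have hJ0 : 0 ≤ J := integral_nonneg fun η => by positivity
  set K : ℝ := (max (V * (M'^2 * 2 ^ (2*l))) (M'^2 * J)) * 2 ^ β + 1 with hKdef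
  have hmax0 : 0 ≤ max (V * (M'^2 * 2 ^ (2*l))) (M'^2 * J) :=
    le_trans (by positivity) (le_max_left _ _)
  have hK : 0 < K := by
    have h2β : (0:ℝ) < 2 ^ β := Real.rpow_pos_of_pos (by norm_num) β
    nlinarith [mul_nonneg hmax0 h2β.le]
  have hDbound : ∀ t : ℝ, 0 ≤ t → (∫ ξ, D t ξ) ≤ (K - 1) * (1 + t) ^ (-β) := by
    intro t ht
    have h1t : (0:ℝ) < 1 + t := by linarith
    have hbound1t : (0:ℝ) < (1+t) ^ (-β) := Real.rpow_pos_of_pos h1t _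
    rcases le_or_gt t 1 with ht1 | ht1
    · -- small time
      have hDle : ∀ ξ, D t ξ ≤ indicator (closedBall (0:EuclideanSpace ℝ (Fin n)) (2*R))
          (fun _ => M'^2 * 2 ^ (2*l)) ξ := by
        intro ξ
        by_cases hξ : ξ ∈ closedBall (0:EuclideanSpace ℝ (Fin n)) (2*R)
        · simp only [hDdef]
          rw [indicator_of_mem hξ, indicator_of_mem hξ]
          have hξn : ‖ξ‖ ≤ 2*R := by simpa [mem_closedBall, dist_zero_right] using hξ
          have h1 : ‖ξ‖ ^ (2*l) ≤ 2 ^ (2*l) :=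
            Real.rpow_le_rpow (norm_nonneg _) (by linarith) (by linarith)
          have h2 : Real.exp (-(b * t * ‖ξ‖ ^ (2*α))) ≤ 1 := by
            rw [Real.exp_le_one_iff]
            have : (0:ℝ) ≤ ‖ξ‖ ^ (2*α) := Real.rpow_nonneg (norm_nonneg _) _
            nlinarith [mul_nonneg (mul_nonneg hb.le ht) this]
          calc M'^2 * (‖ξ‖ ^ (2*l) * Real.exp (-(b * t * ‖ξ‖ ^ (2*α))))
              ≤ M'^2 * (2 ^ (2*l) * 1) := by
                apply mul_le_mul_of_nonneg_left _ (by positivity)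
                exact mul_le_mul h1 h2 (Real.exp_pos _).le (by positivity)
            _ = M'^2 * 2 ^ (2*l) := by ring
        · simp only [hDdef]
          rw [indicator_of_notMem hξ, indicator_of_notMem hξ]
      have hindint : Integrable (indicator (closedBall (0:EuclideanSpace ℝ (Fin n)) (2*R))
          (fun _ => M'^2 * 2 ^ (2*l))) := by
        exact ((integrableOn_const
          measure_closedBall_lt_top.ne).integrable_indicator measurableSet_closedBall)
      have hint1 : (∫ ξ, D t ξ) ≤ V * (M'^2 * 2 ^ (2*l)) := by
        calc (∫ ξ, D t ξ) ≤ ∫ ξ, indicator (closedBall (0:EuclideanSpace ℝ (Fin n)) (2*R))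
              (fun _ => M'^2 * 2 ^ (2*l)) ξ := integral_mono (hDint t) hindint hDle
          _ = V * (M'^2 * 2 ^ (2*l)) := by
              rw [integral_indicator_const _ measurableSet_closedBall, smul_eq_mul, hVdef, measureReal_def]
      have hone : 1 ≤ 2 ^ β * (1+t) ^ (-β) := by
        have hle : (1+t) ^ β ≤ 2 ^ β := Real.rpow_le_rpow (by linarith) (by linarith) hβ
        rw [Real.rpow_neg h1t.le, ← div_eq_mul_inv, le_div_iff₀ (Real.rpow_pos_of_pos h1t β)]
        simpa using hle
      calc (∫ ξ, D t ξ) ≤ V * (M'^2 * 2 ^ (2*l)) := hint1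
        _ ≤ V * (M'^2 * 2 ^ (2*l)) * (2 ^ β * (1+t) ^ (-β)) :=
            le_mul_of_one_le_right (mul_nonneg hV (by positivity)) hone
        _ ≤ (K - 1) * (1 + t) ^ (-β) := by
            rw [hKdef]
            have : V * (M'^2 * 2 ^ (2*l)) * 2 ^ β
                ≤ (max (V * (M'^2 * 2 ^ (2*l))) (M'^2 * J)) * 2 ^ β :=
              mul_le_mul_of_nonneg_right (le_max_left _ _)
                (Real.rpow_nonneg (by norm_num) β)
            nlinarith [this, hbound1t]
    · -- large time
      have ht0 : (0:ℝ) < t := by linarith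
      have hft : Integrable (fun ξ : EuclideanSpace ℝ (Fin n) =>
          ‖ξ‖ ^ (2*l) * Real.exp (-(b * t * ‖ξ‖ ^ (2*α)))) :=
        aux_integrable n (b*t) (2*α) (2*l) (by positivity) (by linarith) (by linarith)
      have hstep1 : (∫ ξ, D t ξ) ≤ M'^2 * ∫ ξ : EuclideanSpace ℝ (Fin n),
          ‖ξ‖ ^ (2*l) * Real.exp (-(b * t * ‖ξ‖ ^ (2*α))) := by
        rw [← integral_const_mul]
        apply integral_mono (hDint t) (hft.const_mul _)
        intro ξ
        simp only [hDdef]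
        exact indicator_le_self' (fun x _ => by positivity) ξ
      -- change of variables
      set ρ : ℝ := t ^ (1/(2*α)) with hρdef
      have hρ : 0 < ρ := Real.rpow_pos_of_pos ht0 _
      have hcomp : ∀ y : EuclideanSpace ℝ (Fin n),
          ‖ρ • y‖ ^ (2*l) * Real.exp (-(b * ‖ρ • y‖ ^ (2*α)))
          = ρ ^ (2*l) * (‖y‖ ^ (2*l) * Real.exp (-(b * t * ‖y‖ ^ (2*α)))) := by
        intro y
        have hny : ‖ρ • y‖ = ρ * ‖y‖ := by
          rw [norm_smul, Real.norm_eq_abs, abs_of_pos hρ]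
        have hα2 : ρ ^ (2*α) = t := by
          rw [hρdef, ← Real.rpow_mul ht0.le]
          rw [show (1/(2*α)) * (2*α) = 1 by field_simp]
          exact Real.rpow_one t
        rw [hny, Real.mul_rpow hρ.le (norm_nonneg y), Real.mul_rpow hρ.le (norm_nonneg y), hα2]
        ring
      have hcv := Measure.integral_comp_smul (volume : Measure (EuclideanSpace ℝ (Fin n)))
        (fun y : EuclideanSpace ℝ (Fin n) => ‖y‖ ^ (2*l) * Real.exp (-(b * ‖y‖ ^ (2*α)))) ρ
      simp only [hcomp] at hcv
      rw [integral_const_mul, finrank_euclideanSpace_fin, smul_eq_mul, ← hJdef] at hcv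
      have habs : |((ρ ^ n : ℝ))⁻¹| = ρ ^ (-(n:ℝ)) := by
        rw [abs_of_nonneg (by positivity), ← Real.rpow_natCast ρ n, ← Real.rpow_neg hρ.le]
      rw [habs] at hcv
      have hρl : (0:ℝ) < ρ ^ (2*l) := Real.rpow_pos_of_pos hρ _
      have hval : (∫ ξ : EuclideanSpace ℝ (Fin n),
          ‖ξ‖ ^ (2*l) * Real.exp (-(b * t * ‖ξ‖ ^ (2*α)))) = ρ ^ (-(n:ℝ) - 2*l) * J := by
        rw [Real.rpow_sub hρ, eq_comm, div_mul_eq_mul_div, div_eq_iff hρl.ne']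
        linear_combination -hcv
      have hρβ : ρ ^ (-(n:ℝ) - 2*l) = t ^ (-β) := by
        rw [hρdef, ← Real.rpow_mul ht0.le, hβdef]
        congr 1
        field_simp
        ring
      have htβ : t ^ (-β) ≤ 2 ^ β * (1+t) ^ (-β) := by
        have h1 : (1+t) ^ β ≤ 2 ^ β * t ^ β := by
          rw [← Real.mul_rpow (by norm_num) ht0.le]
          exact Real.rpow_le_rpow (by linarith) (by linarith) hβ
        have ha : (0:ℝ) < t ^ β := Real.rpow_pos_of_pos ht0 β
        have hbb : (0:ℝ) < (1+t) ^ β := Real.rpow_pos_of_pos h1t β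
        rw [Real.rpow_neg ht0.le, Real.rpow_neg h1t.le, ← one_div, ← div_eq_mul_inv,
          div_le_div_iff₀ ha hbb]
        nlinarith [h1]
      calc (∫ ξ, D t ξ) ≤ M'^2 * ∫ ξ : EuclideanSpace ℝ (Fin n),
            ‖ξ‖ ^ (2*l) * Real.exp (-(b * t * ‖ξ‖ ^ (2*α))) := hstep1
        _ = M'^2 * (ρ ^ (-(n:ℝ) - 2*l) * J) := by rw [hval]
        _ = M'^2 * J * t ^ (-β) := by rw [hρβ]; ring
        _ ≤ M'^2 * J * (2 ^ β * (1+t) ^ (-β)) :=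
            mul_le_mul_of_nonneg_left htβ (mul_nonneg (by positivity) hJ0)
        _ ≤ (K - 1) * (1 + t) ^ (-β) := by
            rw [hKdef]
            have : M'^2 * J * 2 ^ β ≤ (max (V * (M'^2 * 2 ^ (2*l))) (M'^2 * J)) * 2 ^ β :=
              mul_le_mul_of_nonneg_right (le_max_right _ _)
                (Real.rpow_nonneg (by norm_num) β)
            nlinarith [this, hbound1t]
  refine ⟨K, hK, fun t ht => ?_⟩
  have h1t : (0:ℝ) < 1 + t := by linarith
  have hbound1t : (0:ℝ) < (1+t) ^ (-β) := Real.rpow_pos_of_pos h1t _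
  have hmono : (∫ ξ : EuclideanSpace ℝ (Fin n),
      (‖ξ‖ ^ l * χ ξ * Real.exp (-(t * (‖ξ‖ ^ (2*α) / (1 + m * ‖ξ‖ ^ 2))))) ^ 2)
      ≤ ∫ ξ, D t ξ :=
    integral_mono_of_nonneg (Filter.Eventually.of_forall fun ξ => sq_nonneg _) (hDint t)
      (Filter.Eventually.of_forall (hg2D t ht))
  have := (hmono.trans (hDbound t ht))
  calc (∫ ξ : EuclideanSpace ℝ (Fin n),
      (‖ξ‖ ^ l * χ ξ * Real.exp (-(t * (‖ξ‖ ^ (2*α) / (1 + m * ‖ξ‖ ^ 2))))) ^ 2)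
      ≤ (K - 1) * (1 + t) ^ (-β) := this
    _ ≤ K * (1 + t) ^ (-(((n:ℝ) + 2*l) / (2*α))) := by
        rw [show -(((n:ℝ) + 2*l) / (2*α)) = -β by rw [hβdef]]
        nlinarith [hbound1t]


set_option maxHeartbeats 1000000 in
/-- L¹ → L² decay for the low-frequency part of the Green function,
stated on the Fourier side via Plancherel. -/
theorem low_frequency_L1_L2_decay (n : ℕ) (hn : 1 ≤ n) (α l m R : ℝ)
    (hα : 0 < α) (hl : 0 ≤ l) (hm : 0 < m) (hR : 0 < R) (hR1 : R < 1)
    (χ : EuclideanSpace ℝ (Fin n) → ℝ) (hχ : ContDiff ℝ (⊤ : ℕ∞) χ)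
    (hχ1 : ∀ ξ, ‖ξ‖ ≤ R → χ ξ = 1) (hχ0 : ∀ ξ, 2 * R ≤ ‖ξ‖ → χ ξ = 0) :
    ∃ C > 0, ∀ φ : EuclideanSpace ℝ (Fin n) → ℂ, MemLp φ 1 volume →
      ∀ t : ℝ, 0 ≤ t →
        eLpNorm (fun ξ : EuclideanSpace ℝ (Fin n) =>
            (‖ξ‖ ^ l * χ ξ *
              Real.exp (-(t * (‖ξ‖ ^ (2 * α) / (1 + m * ‖ξ‖ ^ 2))))) •
              FourierTransform.fourier φ ξ) 2 volume
          ≤ ENNReal.ofReal (C * (1 + t) ^ (-((n : ℝ) / (4 * α)) - l / (2 * α))) *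
              eLpNorm φ 1 volume := by
  obtain ⟨K, hK, hcore⟩ := aux_core n α l m R hα hl hm hR hR1 χ hχ.continuous hχ0
  refine ⟨K ^ (2⁻¹:ℝ), Real.rpow_pos_of_pos hK _, fun φ hφ t ht => ?_⟩
  have hφi : Integrable φ volume := memLp_one_iff_integrable.mp hφ
  have h1t : (0:ℝ) < 1 + t := by linarith
  set g : EuclideanSpace ℝ (Fin n) → ℝ := fun ξ =>
    ‖ξ‖ ^ l * χ ξ * Real.exp (-(t * (‖ξ‖ ^ (2 * α) / (1 + m * ‖ξ‖ ^ 2)))) with hgdef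
  have hgc : Continuous g := by
    rw [hgdef]
    apply Continuous.mul
    · exact (continuous_norm.rpow_const fun _ => Or.inr hl).mul hχ.continuous
    · apply Real.continuous_exp.comp
      apply Continuous.neg
      apply continuous_const.mul
      apply Continuous.div
      · exact continuous_norm.rpow_const fun _ => Or.inr (by linarith)
      · exact continuous_const.add (continuous_const.mul (continuous_norm.pow 2))
      · intro ξ; positivity
  have hgsupp : HasCompactSupport g := by
    apply HasCompactSupport.intro (isCompact_closedBall (0:EuclideanSpace ℝ (Fin n)) (2*R))
    intro ξ hξ
    have h2R : 2*R ≤ ‖ξ‖ := by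
      have : ¬ ‖ξ‖ ≤ 2*R := by simpa [mem_closedBall, dist_zero_right] using hξ
      linarith [not_le.mp this]
    simp [hgdef, hχ0 ξ h2R]
  have hgmem : MemLp g 2 volume := hgc.memLp_of_hasCompactSupport hgsupp
  set B : ℝ := ∫ x, ‖φ x‖ with hBdef
  have hB0 : 0 ≤ B := integral_nonneg fun x => norm_nonneg _
  have hBnorm : ∀ ξ, ‖FourierTransform.fourier φ ξ‖ ≤ B := fun ξ =>
    VectorFourier.norm_fourierIntegral_le_integral_norm _ _ _ _ _
  have hstep1 : eLpNorm (fun ξ => g ξ • FourierTransform.fourier φ ξ) 2 volume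
      ≤ eLpNorm (B • g) 2 volume := by
    apply eLpNorm_mono
    intro ξ
    have h2 : ‖(B • g) ξ‖ = B * ‖g ξ‖ := by
      rw [Pi.smul_apply, smul_eq_mul, norm_mul, Real.norm_eq_abs B, abs_of_nonneg hB0]
    rw [norm_smul, h2]
    exact (mul_le_mul_of_nonneg_left (hBnorm ξ) (norm_nonneg _)).trans_eq (mul_comm _ _)
  have hstep2 : eLpNorm (B • g) 2 volume = ENNReal.ofReal B * eLpNorm g 2 volume := by
    rw [eLpNorm_const_smul, Real.enorm_eq_ofReal hB0]
  have hφnorm : eLpNorm φ 1 volume = ENNReal.ofReal B := by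
    rw [eLpNorm_one_eq_lintegral_enorm, ← ofReal_integral_norm_eq_lintegral_enorm hφi]
  have hgbound : eLpNorm g 2 volume
      ≤ ENNReal.ofReal (K ^ (2⁻¹:ℝ) * (1 + t) ^ (-((n : ℝ) / (4 * α)) - l / (2 * α))) := by
    rw [hgmem.eLpNorm_eq_integral_rpow_norm two_ne_zero ENNReal.ofNat_ne_top]
    apply ENNReal.ofReal_le_ofReal
    have htr : ((2:ℝ≥0∞)).toReal = 2 := by simp
    rw [htr]
    have hi : (∫ ξ, ‖g ξ‖ ^ (2:ℝ)) = ∫ ξ, (g ξ)^2 := by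
      congr 1
      ext ξ
      rw [show ((2:ℝ)) = ((2:ℕ):ℝ) by norm_num, Real.rpow_natCast, Real.norm_eq_abs, sq_abs]
    rw [show ((2:ℝ))⁻¹ = (2⁻¹:ℝ) by norm_num, hi]
    calc (∫ ξ, (g ξ)^2) ^ (2⁻¹:ℝ)
        ≤ (K * (1 + t) ^ (-(((n:ℝ) + 2*l) / (2*α)))) ^ (2⁻¹:ℝ) :=
          Real.rpow_le_rpow (integral_nonneg fun _ => sq_nonneg _) (hcore t ht) (by norm_num)
      _ = K ^ (2⁻¹:ℝ) * (1 + t) ^ (-((n : ℝ) / (4 * α)) - l / (2 * α)) := by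
          have hexp : (-(((n:ℝ) + 2*l) / (2*α))) * 2⁻¹
              = -((n : ℝ) / (4 * α)) - l / (2 * α) := by
            field_simp
            ring
          rw [Real.mul_rpow hK.le (Real.rpow_nonneg h1t.le _),
            ← Real.rpow_mul h1t.le, hexp]
  calc eLpNorm (fun ξ : EuclideanSpace ℝ (Fin n) =>
      (‖ξ‖ ^ l * χ ξ * Real.exp (-(t * (‖ξ‖ ^ (2 * α) / (1 + m * ‖ξ‖ ^ 2))))) •
        FourierTransform.fourier φ ξ) 2 volume
      ≤ ENNReal.ofReal B * eLpNorm g 2 volume := hstep1.trans_eq hstep2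
    _ ≤ ENNReal.ofReal B *
        ENNReal.ofReal (K ^ (2⁻¹:ℝ) * (1 + t) ^ (-((n : ℝ) / (4 * α)) - l / (2 * α))) :=
        mul_le_mul_right hgbound _
    _ = ENNReal.ofReal (K ^ (2⁻¹:ℝ) * (1 + t) ^ (-((n : ℝ) / (4 * α)) - l / (2 * α))) *
        eLpNorm φ 1 volume := by rw [hφnorm, mul_comm]
end
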